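/- arXiv:2012.15825 — 3 statements merged into one kernel-verified Lean document; each statement's English description precedes it below -/
import Mathlib

section
/- For all integers n ≥ 1 and k with 1 ≤ k ≤ n-1, setting x = k/n, the binomial coefficient satisfies (1/(2√2))·√(n/(k(n-k)))·exp(n·h(x)) ≤ C(n,k) ≤ (1/√(2π))·√(n/(k(n-k)))·exp(n·h(x)), where h(x) = -x·log x - (1-x)·log(1-x) is the binary entropy. -/
/-!
With `s = Stirling.stirlingSeq` and `m = n - k`, we have `n! = s(n) √(2n) (n/e)^n` and
`exp (n h(k/n)) = n^n / (k^k m^m)`, so `C(n,k) = s(n) / (s(k) s(m)) · √(n/(km)) exp (n h(k/n)) / √2`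
and both bounds are bounds on the ratio `s(n) / (s(k) s(m))`. Since `s` decreases to `√π`, the
ratio is at most `1/√π`. For the lower bound `1/2`, Robbins' estimate
`log s(j) - log s(j+1) ≤ 1/(12 j (j+1))` telescopes to `s(j) ≤ s(l) exp (1/(12j) - 1/(12l))` for
`j ≤ l` and to `s(j) ≤ √π exp (1/(12j))`. Applied to `s(k)` and to `s(m) / s(n)` with `k ≤ m`, these
leave a factor at most `√π exp (7/72) < 2`, except when `k = m = 1`, where `s(1)² = 2 s(2)`.
-/

/-- The binary entropy function `h(x) = -x log x - (1-x) log(1-x)`. -/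
noncomputable def binEnt (x : ℝ) : ℝ := -x * Real.log x - (1 - x) * Real.log (1 - x)

open Real Filter Topology
open scoped Nat

namespace Stirling

theorem stirlingSeq_pos {n : ℕ} (hn : n ≠ 0) : 0 < stirlingSeq n :=
  (sqrt_pos.2 pi_pos).trans_le (sqrt_pi_le_stirlingSeq hn)

theorem stirlingSeq_le_of_le {m n : ℕ} (hm : m ≠ 0) (hmn : m ≤ n) :
    stirlingSeq n ≤ stirlingSeq m := by
  obtain ⟨m, rfl⟩ := Nat.exists_eq_succ_of_ne_zero hm
  obtain ⟨n, rfl⟩ := Nat.exists_eq_add_of_le' (Nat.one_le_of_lt hmn)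
  exact stirlingSeq'_antitone (Nat.succ_le_succ_iff.mp hmn)

theorem factorial_eq_stirlingSeq_mul {n : ℕ} (hn : n ≠ 0) :
    (n ! : ℝ) = stirlingSeq n * √(2 * n) * (n / exp 1) ^ n := by
  rw [mul_assoc, stirlingSeq, div_mul_cancel₀]
  positivity

theorem stirlingSeq_one_sq : stirlingSeq 1 ^ 2 = 2 * stirlingSeq 2 := by
  simp only [stirlingSeq, Nat.factorial]
  push_cast
  rw [show √(2 * 2 : ℝ) = 2 by rw [sqrt_eq_iff_mul_self_eq] <;> norm_num]
  field_simp
  rw [sq_sqrt (by norm_num)]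

theorem monotone_log_stirlingSeq_sub :
    Monotone fun n : ℕ ↦ log (stirlingSeq (n + 1)) - 1 / (12 * (n + 1 : ℝ)) := by
  refine monotone_nat_of_le_succ fun n ↦ ?_
  have hstep := log_stirlingSeq_sdiff_le (n + 1)
  push_cast at hstep ⊢
  have htelescope : 1 / (12 * ((n : ℝ) + 1) * ((n : ℝ) + 1 + 1)) =
      1 / (12 * ((n : ℝ) + 1)) - 1 / (12 * ((n : ℝ) + 1 + 1)) := by
    field_simp; ring
  linarith

theorem stirlingSeq_le_mul_exp {m n : ℕ} (hm : m ≠ 0) (hmn : m ≤ n) :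
    stirlingSeq m ≤ stirlingSeq n * exp (1 / (12 * m) - 1 / (12 * n)) := by
  obtain ⟨m, rfl⟩ := Nat.exists_eq_succ_of_ne_zero hm
  obtain ⟨n, rfl⟩ := Nat.exists_eq_add_of_le' (Nat.one_le_of_lt hmn)
  have hmono := monotone_log_stirlingSeq_sub (Nat.succ_le_succ_iff.mp hmn)
  push_cast at hmono ⊢
  rw [← exp_log (stirlingSeq'_pos m), ← exp_log (stirlingSeq'_pos n), ← exp_add]
  gcongr
  linarith

theorem stirlingSeq_le_sqrt_pi_mul_exp {n : ℕ} (hn : n ≠ 0) :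
    stirlingSeq n ≤ √π * exp (1 / (12 * n)) := by
  obtain ⟨n, rfl⟩ := Nat.exists_eq_succ_of_ne_zero hn
  have hlim : Tendsto (fun N : ℕ ↦ log (stirlingSeq (N + 1)) - 1 / (12 * (N + 1 : ℝ)))
      atTop (𝓝 (log √π - 0)) :=
    ((continuousAt_log (by positivity)).tendsto.comp
      (tendsto_stirlingSeq_sqrt_pi.comp (tendsto_add_atTop_nat 1))).sub <|
      tendsto_const_nhds.div_atTop <|
        (tendsto_natCast_atTop_atTop.atTop_add tendsto_const_nhds).const_mul_atTop (by norm_num)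
  have hbound := monotone_log_stirlingSeq_sub.ge_of_tendsto hlim n
  rw [sub_zero, sub_le_iff_le_add] at hbound
  push_cast
  rw [← exp_log (stirlingSeq'_pos n), ← exp_log (sqrt_pos.2 pi_pos), ← exp_add]
  exact exp_le_exp.2 hbound

theorem robbins_exponent_le {k m : ℕ} (hk : k ≠ 0) (hm : 2 ≤ m) :
    1 / (12 * k : ℝ) + (1 / (12 * m) - 1 / (12 * (k + m : ℕ))) ≤ 7 / 72 := by
  have hm' : (2 : ℝ) ≤ m := by exact_mod_cast hm
  obtain rfl | hk2 : k = 1 ∨ 2 ≤ k := by omega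
  · have hdiff : 1 / (12 * m : ℝ) - 1 / (12 * (1 + m : ℕ)) = 1 / (12 * (m * (m + 1))) := by
      push_cast; field_simp; ring
    have hle : 1 / (12 * (m * (m + 1)) : ℝ) ≤ 1 / (12 * (2 * (2 + 1))) := by gcongr
    rw [hdiff]
    norm_num at hle ⊢
    linarith
  · have hk2' : (2 : ℝ) ≤ k := by exact_mod_cast hk2
    have hk' : 1 / (12 * k : ℝ) ≤ 1 / (12 * 2) := by gcongr
    have hm'' : 1 / (12 * m : ℝ) ≤ 1 / (12 * 2) := by gcongr
    have hkm : 0 ≤ 1 / (12 * (k + m : ℕ) : ℝ) := by positivity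
    linarith

theorem sqrt_pi_mul_exp_le_two : √π * exp (7 / 72) ≤ 2 := by
  have hexp : exp (7 / 72) ≤ 72 / 65 := by
    convert exp_bound_div_one_sub_of_interval (x := 7 / 72) (by norm_num) (by norm_num) using 1
    norm_num
  have hpi : √π ≤ 16 / 9 := by
    rw [sqrt_le_left (by norm_num)]
    linarith [pi_lt_d2]
  calc √π * exp (7 / 72) ≤ 16 / 9 * (72 / 65) := by gcongr
    _ ≤ 2 := by norm_num

theorem stirlingSeq_mul_le_two_mul_stirlingSeq_add {k m : ℕ} (hk : k ≠ 0) (hm : m ≠ 0) :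
    stirlingSeq k * stirlingSeq m ≤ 2 * stirlingSeq (k + m) := by
  wlog hkm : k ≤ m generalizing k m
  · rw [mul_comm, add_comm]
    exact this hm hk (le_of_not_ge hkm)
  obtain rfl | hm2 : m = 1 ∨ 2 ≤ m := by omega
  · obtain rfl : k = 1 := by omega
    rw [← sq, stirlingSeq_one_sq]
  have hsum : 0 < stirlingSeq (k + m) := stirlingSeq_pos (by omega)
  calc stirlingSeq k * stirlingSeq m
      ≤ √π * exp (1 / (12 * k)) *
        (stirlingSeq (k + m) * exp (1 / (12 * m) - 1 / (12 * (k + m : ℕ)))) := by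
        gcongr
        · exact (stirlingSeq_pos hm).le
        · exact stirlingSeq_le_sqrt_pi_mul_exp hk
        · exact stirlingSeq_le_mul_exp hm (by omega)
    _ ≤ √π * exp (7 / 72) * stirlingSeq (k + m) := by
        rw [mul_mul_mul_comm, ← exp_add, mul_right_comm]
        gcongr
        exact robbins_exponent_le hk hm2
    _ ≤ 2 * stirlingSeq (k + m) := by
        gcongr
        exact sqrt_pi_mul_exp_le_two

theorem sqrt_pi_mul_stirlingSeq_add_le_mul {k m : ℕ} (hk : k ≠ 0) (hm : m ≠ 0) :
    √π * stirlingSeq (k + m) ≤ stirlingSeq k * stirlingSeq m := by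
  rw [mul_comm]
  exact mul_le_mul (stirlingSeq_le_of_le hk (by omega)) (sqrt_pi_le_stirlingSeq hm)
    (by positivity) (stirlingSeq_pos hk).le

end Stirling

open Stirling

theorem exp_mul_binEnt_div {k m : ℕ} (hk : k ≠ 0) (hm : m ≠ 0) :
    exp ((k + m : ℕ) * binEnt (k / (k + m : ℕ))) =
      ((k + m : ℕ) : ℝ) ^ (k + m) / ((k : ℝ) ^ k * (m : ℝ) ^ m) := by
  have hK : (0 : ℝ) < k := by positivity
  have hM : (0 : ℝ) < m := by positivity
  have hN : (0 : ℝ) < (k + m : ℕ) := by positivity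
  have hsum : ((k + m : ℕ) : ℝ) = k + m := Nat.cast_add k m
  have hcompl : 1 - (k : ℝ) / (k + m : ℕ) = m / (k + m : ℕ) := by
    field_simp; linarith
  have hlog : ((k + m : ℕ) : ℝ) * binEnt (k / (k + m : ℕ)) =
      (k + m : ℕ) * log (k + m : ℕ) - k * log k - m * log m := by
    rw [binEnt, hcompl, log_div hK.ne' hN.ne', log_div hM.ne' hN.ne']
    field_simp
    linear_combination (-log (k + m : ℕ)) * hsum
  rw [hlog, exp_sub, exp_sub, exp_nat_mul, exp_nat_mul, exp_nat_mul,
    exp_log hN, exp_log hK, exp_log hM, div_div]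

theorem choose_eq_stirlingSeq_div_mul {k m : ℕ} (hk : k ≠ 0) (hm : m ≠ 0) :
    ((k + m).choose k : ℝ) = stirlingSeq (k + m) / (stirlingSeq k * stirlingSeq m) *
      (√((k + m : ℕ) / (k * m)) * exp ((k + m : ℕ) * binEnt (k / (k + m : ℕ)))) / √2 := by
  have hsqrt : √((k + m : ℕ) / (k * m) : ℝ) =
      √(2 * (k + m : ℕ)) * √2 / (√(2 * k) * √(2 * m)) := by
    rw [← sqrt_mul' _ (by norm_num), ← sqrt_mul (by positivity),
      ← sqrt_div' _ (by positivity)]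
    congr 1
    field_simp
  have hexp : exp 1 ^ (k + m) = exp 1 ^ k * exp 1 ^ m := pow_add _ _ _
  rw [Nat.cast_choose ℝ (Nat.le_add_right k m), add_tsub_cancel_left,
    factorial_eq_stirlingSeq_mul (by omega), factorial_eq_stirlingSeq_mul hk,
    factorial_eq_stirlingSeq_mul hm, exp_mul_binEnt_div hk hm, hsqrt, div_pow, div_pow, div_pow,
    hexp]
  field_simp

theorem binomial_entropy_bounds_general (n k : ℕ) (hk : 1 ≤ k) (hkn : k ≤ n - 1) :
    (1 / (2 * Real.sqrt 2)) * Real.sqrt ((n : ℝ) / (k * (n - k))) *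
        Real.exp (n * binEnt ((k : ℝ) / n)) ≤ (Nat.choose n k : ℝ) ∧
    (Nat.choose n k : ℝ) ≤
      (1 / Real.sqrt (2 * Real.pi)) * Real.sqrt ((n : ℝ) / (k * (n - k))) *
        Real.exp (n * binEnt ((k : ℝ) / n)) := by
  obtain ⟨m, rfl⟩ : ∃ m, n = k + m := ⟨n - k, by omega⟩
  have hk0 : k ≠ 0 := by omega
  have hm0 : m ≠ 0 := by omega
  have hsK := stirlingSeq_pos hk0
  have hsM := stirlingSeq_pos hm0
  have hsub : ((k + m : ℕ) : ℝ) - k = m := by push_cast; ring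
  rw [hsub, choose_eq_stirlingSeq_div_mul hk0 hm0]
  set A := √(((k + m : ℕ) : ℝ) / (k * m)) * exp ((k + m : ℕ) * binEnt (k / (k + m : ℕ)))
    with hA_def
  constructor
  · have hratio : 1 / 2 ≤ stirlingSeq (k + m) / (stirlingSeq k * stirlingSeq m) := by
      rw [le_div_iff₀ (by positivity)]
      linarith [stirlingSeq_mul_le_two_mul_stirlingSeq_add hk0 hm0]
    calc _ = 1 / 2 * A / √2 := by ring
      _ ≤ _ := by gcongr
  · have hratio : stirlingSeq (k + m) / (stirlingSeq k * stirlingSeq m) ≤ 1 / √π := by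
      rw [div_le_div_iff₀ (by positivity) (by positivity), one_mul, mul_comm]
      exact sqrt_pi_mul_stirlingSeq_add_le_mul hk0 hm0
    calc _ ≤ 1 / √π * A / √2 := by gcongr
      _ = _ := by rw [sqrt_mul zero_le_two, hA_def]; field_simp

/-- Entropic estimates for binomial coefficients: for `1 ≤ k ≤ n-1` and
`x = k/n`,
`(1/(2√2)) √(n/(k(n-k))) exp(n h(x)) ≤ C(n,k) ≤ (1/√(2π)) √(n/(k(n-k))) exp(n h(x))`. -/
theorem binomial_entropy_bounds (n k : ℕ) (hk : 1 ≤ k) (hkn : k ≤ n - 1)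
    (hn : 1 ≤ n) :
    (1 / (2 * Real.sqrt 2)) * Real.sqrt ((n : ℝ) / (k * (n - k))) *
        Real.exp (n * binEnt ((k : ℝ) / n)) ≤ (Nat.choose n k : ℝ) ∧
    (Nat.choose n k : ℝ) ≤
      (1 / Real.sqrt (2 * Real.pi)) * Real.sqrt ((n : ℝ) / (k * (n - k))) *
        Real.exp (n * binEnt ((k : ℝ) / n)) :=
  binomial_entropy_bounds_general n k hk hkn
end

section
/- For the binary entropy function h(x) = -x log x - (1-x) log(1-x), the inequality h(x) - 2h(x/2) ≤ -(2/3)x holds for all x ∈ [0,1]. -/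
/-!
With `φ t = t log t`, one has `h(x) - 2 h(x/2) = φ(2 - x) - φ(1 - x) - 2 log 2`. Putting
`t = 1 - x`, the function `φ(t + 1) - φ(t) - t log 2` has derivative `log ((t + 1) / (2t)) ≥ 0`
on `(0, 1]`, so comparing `t = 1 - x` with `t = 1` gives `h(x) - 2 h(x/2) ≤ -x log 2`, and
`log 2 > 2/3`.
-/

open Real Set

lemma mul_log_div (x : ℝ) {y : ℝ} (hy : y ≠ 0) : x * log (x / y) = x * log x - x * log y := by
  rcases eq_or_ne x 0 with rfl | hx
  · simp
  · rw [log_div hx hy]; ring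

lemma binEnt_sub_two_mul_binEnt_half {x : ℝ} (hx : x ≠ 2) :
    binEnt x - 2 * binEnt (x / 2) =
      (2 - x) * log (2 - x) - (1 - x) * log (1 - x) - 2 * log 2 := by
  have hlog : log (1 - x / 2) = log (2 - x) - log 2 := by
    rw [← log_div (sub_ne_zero.2 hx.symm) two_ne_zero]; ring_nf
  simp only [binEnt, hlog]
  linear_combination mul_log_div x two_ne_zero

lemma monotoneOn_add_one_mul_log_sub_mul_log :
    MonotoneOn (fun t : ℝ => (t + 1) * log (t + 1) - t * log t - log 2 * t) (Icc 0 1) := by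
  refine monotoneOn_of_hasDerivWithinAt_nonneg (convex_Icc 0 1) (by fun_prop)
    (f' := fun t => log (t + 1) - log t - log 2) (fun t ht => ?_) (fun t ht => ?_)
  all_goals rw [interior_Icc] at ht; obtain ⟨ht0, ht1⟩ := ht
  · have h₁ := (hasDerivAt_mul_log (x := t + 1) (by linarith)).comp_add_const t 1
    have h₂ := hasDerivAt_mul_log ht0.ne'
    exact (((h₁.sub h₂).sub ((hasDerivAt_id t).const_mul (log 2))).congr_deriv
      (by ring)).hasDerivWithinAt
  · have h : log (2 * t) ≤ log (t + 1) := log_le_log (by positivity) (by linarith)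
    rw [log_mul two_ne_zero ht0.ne'] at h
    linarith

lemma binEnt_sub_two_mul_binEnt_half_le {x : ℝ} (hx : x ∈ Icc (0 : ℝ) 1) :
    binEnt x - 2 * binEnt (x / 2) ≤ -log 2 * x := by
  obtain ⟨hx0, hx1⟩ := hx
  have h := monotoneOn_add_one_mul_log_sub_mul_log ⟨sub_nonneg.2 hx1, by linarith⟩
    (right_mem_Icc.2 zero_le_one) (by linarith : 1 - x ≤ 1)
  rw [binEnt_sub_two_mul_binEnt_half (by linarith)]
  norm_num at h
  ring_nf at h ⊢
  linarith

/-- For all `x ∈ [0,1]`, `h(x) - 2h(x/2) ≤ -(2/3)x`. -/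
theorem binEnt_sub_two_half_le (x : ℝ) (hx : x ∈ Set.Icc (0 : ℝ) 1) :
    binEnt x - 2 * binEnt (x / 2) ≤ -(2 / 3) * x := by
  have hlog2 := log_two_gt_d9
  calc binEnt x - 2 * binEnt (x / 2) ≤ -log 2 * x := binEnt_sub_two_mul_binEnt_half_le hx
    _ ≤ -(2 / 3) * x := by gcongr; exacts [hx.1, by linarith]
end

section
/- Let g be a d×d unitary matrix with eigenvalues e^{iφ_j}, all φ_j ∈ (-π, π). For θ ∈ (0,1], the matrix F_θ(g) = ((1-θ)I + (1+θ)g)·((1+θ)I + (1-θ)g)⁻¹ is well-defined (the inverse exists), is unitary, and satisfies F_1(g) = g; moreover each eigenvalue of F_θ(g) equals (1 + iθ tan(φ_j/2))/(1 - iθ tan(φ_j/2)). -/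
/-!
Writing `g = h D hᴴ` with `D` diagonal, the path `F_θ` commutes with conjugation by the unitary
`h`, so everything reduces to the diagonal entries `z = e^{iφ}`. With `t = tan (φ/2)` one has
`z = (1 + it)/(1 - it)`, the Cayley transform `f(-it)`; this needs `φ ∈ (-π, π)`. In the
coordinate `t` the Möbius map `z ↦ ((1-θ) + (1+θ)z)/((1+θ) + (1-θ)z)` is just `t ↦ θt`: its
denominator times `1 - it` is `2(1 - iθt) ≠ 0`, and `(1 + iθt)/(1 - iθt)` has modulus one.
-/

open Matrix Complex

/-- The Cayley-path deformation
`F_θ(g) = ((1-θ)I + (1+θ)g) ((1+θ)I + (1-θ)g)⁻¹`. -/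
noncomputable def cayleyPath {d : ℕ} (θ : ℝ) (g : Matrix (Fin d) (Fin d) ℂ) :
    Matrix (Fin d) (Fin d) ℂ :=
  (((1 - θ : ℝ) : ℂ) • (1 : Matrix (Fin d) (Fin d) ℂ) + ((1 + θ : ℝ) : ℂ) • g) *
    (((1 + θ : ℝ) : ℂ) • (1 : Matrix (Fin d) (Fin d) ℂ) + ((1 - θ : ℝ) : ℂ) • g)⁻¹

noncomputable def cayleyCircle (t : ℝ) : ℂ := (1 + (t : ℂ) * I) / (1 - (t : ℂ) * I)

lemma one_sub_ofReal_mul_I_ne_zero (t : ℝ) : (1 : ℂ) - t * I ≠ 0 := by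
  intro h
  simpa using congrArg re h

lemma cayleyCircle_mem_unitary (t : ℝ) : cayleyCircle t ∈ unitary ℂ := by
  have hconj : star ((1 : ℂ) - t * I) = 1 + t * I := by simp
  have hne := one_sub_ofReal_mul_I_ne_zero t
  have hne' : (1 : ℂ) + t * I ≠ 0 := hconj ▸ star_ne_zero.mpr hne
  rw [Unitary.mem_iff_star_mul_self, cayleyCircle, star_div₀, ← hconj, star_star, hconj]
  field_simp

lemma exp_mul_I_eq_cayleyCircle_tan_half {φ : ℝ} (hφ : φ ∈ Set.Ioo (-Real.pi) Real.pi) :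
    exp (φ * I) = cayleyCircle (Real.tan (φ / 2)) := by
  set c : ℂ := (Real.cos (φ / 2) : ℂ)
  set s : ℂ := (Real.sin (φ / 2) : ℂ)
  have hc : c ≠ 0 := ofReal_ne_zero.mpr
    (Real.cos_pos_of_mem_Ioo ⟨by linarith [hφ.1], by linarith [hφ.2]⟩).ne'
  have hplus : exp ((φ / 2 : ℝ) * I) = c + s * I := by
    rw [exp_mul_I, ← ofReal_cos, ← ofReal_sin]
  have hminus : exp (-((φ / 2 : ℝ) * I)) = c - s * I := by
    rw [← neg_mul, exp_mul_I, cos_neg, sin_neg, ← ofReal_cos, ← ofReal_sin]; ring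
  have hminus_ne : c - s * I ≠ 0 := hminus ▸ exp_ne_zero _
  calc exp (φ * I) = exp ((φ / 2 : ℝ) * I) / exp (-((φ / 2 : ℝ) * I)) := by
        rw [← exp_sub]; push_cast; ring_nf
    _ = (c + s * I) / (c - s * I) := by rw [hplus, hminus]
    _ = cayleyCircle (Real.tan (φ / 2)) := by
        rw [cayleyCircle, Real.tan_eq_sin_div_cos, ofReal_div]
        change _ = (1 + s / c * I) / (1 - s / c * I)
        rw [← mul_div_mul_left (1 + s / c * I) _ hc]
        congr 1 <;> field_simp

lemma moebius_cayleyCircle (θ t : ℝ) :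
    ((1 + θ : ℝ) : ℂ) + ((1 - θ : ℝ) : ℂ) * cayleyCircle t ≠ 0 ∧
    (((1 - θ : ℝ) : ℂ) + ((1 + θ : ℝ) : ℂ) * cayleyCircle t) /
      (((1 + θ : ℝ) : ℂ) + ((1 - θ : ℝ) : ℂ) * cayleyCircle t) = cayleyCircle (θ * t) := by
  have hne := one_sub_ofReal_mul_I_ne_zero t
  have hne' := one_sub_ofReal_mul_I_ne_zero (θ * t)
  have hden : (((1 + θ : ℝ) : ℂ) + ((1 - θ : ℝ) : ℂ) * cayleyCircle t) * (1 - t * I)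
      = 2 * (1 - (θ * t : ℝ) * I) := by
    rw [cayleyCircle]; push_cast; field_simp; ring
  have hnum : (((1 - θ : ℝ) : ℂ) + ((1 + θ : ℝ) : ℂ) * cayleyCircle t) * (1 - t * I)
      = 2 * (1 + (θ * t : ℝ) * I) := by
    rw [cayleyCircle]; push_cast; field_simp; ring
  refine ⟨fun h => ?_, ?_⟩
  · rw [h, zero_mul] at hden
    exact mul_ne_zero two_ne_zero hne' hden.symm
  · rw [← mul_div_mul_right _ _ hne, hnum, hden, mul_div_mul_left _ _ two_ne_zero, cayleyCircle]

lemma smul_one_add_smul_diagonal {n R : Type*} [DecidableEq n] [CommRing R] (a b : R)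
    (z : n → R) : a • (1 : Matrix n n R) + b • diagonal z = diagonal fun j => a + b * z j := by
  ext i j
  by_cases hij : i = j <;> simp [hij, one_apply]

section UnitaryConj

variable {n R : Type*} [Fintype n] [DecidableEq n] [CommRing R] [StarRing R]

lemma diagonal_mem_unitaryGroup {w : n → R} (hw : ∀ j, w j ∈ unitary R) :
    diagonal w ∈ unitaryGroup n R := by
  rw [mem_unitaryGroup_iff, star_eq_conjTranspose, diagonal_conjTranspose, diagonal_mul_diagonal,
    ← diagonal_one]
  exact congrArg diagonal (funext fun j => Unitary.mul_star_self_of_mem (hw j))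

variable {U : Matrix n n R}

lemma smul_one_add_smul_unitary_conj (hU : U ∈ unitaryGroup n R) (a b : R) (A : Matrix n n R) :
    a • (1 : Matrix n n R) + b • (U * A * Uᴴ) = U * (a • 1 + b • A) * Uᴴ := by
  rw [Matrix.mul_add, Matrix.add_mul, Matrix.mul_smul, Matrix.mul_one, Matrix.smul_mul,
    ← star_eq_conjTranspose, mem_unitaryGroup_iff.mp hU, Matrix.mul_smul, Matrix.smul_mul]

lemma unitary_conj_mul_unitary_conj (hU : U ∈ unitaryGroup n R) (A B : Matrix n n R) :
    U * A * Uᴴ * (U * B * Uᴴ) = U * (A * B) * Uᴴ := by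
  simp only [Matrix.mul_assoc]
  rw [← Matrix.mul_assoc Uᴴ, ← star_eq_conjTranspose, mem_unitaryGroup_iff'.mp hU, Matrix.one_mul]

lemma inv_unitary_conj (hU : U ∈ unitaryGroup n R) (B : Matrix n n R) :
    (U * B * Uᴴ)⁻¹ = U * B⁻¹ * Uᴴ := by
  rw [Matrix.mul_inv_rev, Matrix.mul_inv_rev, ← star_eq_conjTranspose,
    inv_eq_right_inv (mem_unitaryGroup_iff.mp hU), inv_eq_right_inv (mem_unitaryGroup_iff'.mp hU),
    Matrix.mul_assoc]

end UnitaryConj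

lemma cayleyPath_unitary_conj {d : ℕ} {U : Matrix (Fin d) (Fin d) ℂ}
    (hU : U ∈ unitaryGroup (Fin d) ℂ) (θ : ℝ) (A : Matrix (Fin d) (Fin d) ℂ) :
    cayleyPath θ (U * A * Uᴴ) = U * cayleyPath θ A * Uᴴ := by
  rw [cayleyPath, cayleyPath, smul_one_add_smul_unitary_conj hU,
    smul_one_add_smul_unitary_conj hU, inv_unitary_conj hU, unitary_conj_mul_unitary_conj hU]

lemma cayleyPath_diagonal {d : ℕ} (θ : ℝ) {z : Fin d → ℂ}
    (hz : ∀ j, ((1 + θ : ℝ) : ℂ) + ((1 - θ : ℝ) : ℂ) * z j ≠ 0) :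
    cayleyPath θ (diagonal z) = diagonal fun j =>
      (((1 - θ : ℝ) : ℂ) + ((1 + θ : ℝ) : ℂ) * z j) /
        (((1 + θ : ℝ) : ℂ) + ((1 - θ : ℝ) : ℂ) * z j) := by
  have hinv : (diagonal fun j => ((1 + θ : ℝ) : ℂ) + ((1 - θ : ℝ) : ℂ) * z j)⁻¹ =
      diagonal fun j => (((1 + θ : ℝ) : ℂ) + ((1 - θ : ℝ) : ℂ) * z j)⁻¹ :=
    inv_eq_right_inv <| by
      rw [diagonal_mul_diagonal, ← diagonal_one]
      simp only [mul_inv_cancel₀ (hz _)]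
  rw [cayleyPath, smul_one_add_smul_diagonal, smul_one_add_smul_diagonal, hinv,
    diagonal_mul_diagonal]
  simp only [div_eq_mul_inv]

lemma cayleyPath_one {d : ℕ} (g : Matrix (Fin d) (Fin d) ℂ) : cayleyPath 1 g = g := by
  have h2 : ((2 : ℂ) • (1 : Matrix (Fin d) (Fin d) ℂ))⁻¹ = (2 : ℂ)⁻¹ • 1 :=
    inv_eq_right_inv (by rw [smul_mul_smul, Matrix.mul_one, mul_inv_cancel₀ two_ne_zero, one_smul])
  rw [cayleyPath]
  norm_num
  rw [h2, Matrix.mul_smul, Matrix.mul_one, smul_smul, mul_inv_cancel₀ two_ne_zero, one_smul]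

theorem cayleyPath_unitary_eigenvalues_general {d : ℕ}
    (g h : Matrix (Fin d) (Fin d) ℂ)
    (hh : h ∈ Matrix.unitaryGroup (Fin d) ℂ)
    (φ : Fin d → ℝ) (hφ : ∀ j, φ j ∈ Set.Ioo (-Real.pi) Real.pi)
    (hg : g = h * Matrix.diagonal (fun j => Complex.exp ((φ j : ℂ) * Complex.I)) * hᴴ)
    (θ : ℝ) :
    IsUnit (((1 + θ : ℝ) : ℂ) • (1 : Matrix (Fin d) (Fin d) ℂ) +
        ((1 - θ : ℝ) : ℂ) • g) ∧
    cayleyPath θ g ∈ Matrix.unitaryGroup (Fin d) ℂ ∧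
    cayleyPath 1 g = g ∧
    cayleyPath θ g =
      h * Matrix.diagonal (fun j =>
        (1 + ((θ * Real.tan (φ j / 2) : ℝ) : ℂ) * Complex.I) /
          (1 - ((θ * Real.tan (φ j / 2) : ℝ) : ℂ) * Complex.I)) * hᴴ := by
  have hz : ∀ j, exp (φ j * I) = cayleyCircle (Real.tan (φ j / 2)) :=
    fun j => exp_mul_I_eq_cayleyCircle_tan_half (hφ j)
  have hden : ∀ j, ((1 + θ : ℝ) : ℂ) + ((1 - θ : ℝ) : ℂ) * exp (φ j * I) ≠ 0 := fun j =>
    hz j ▸ (moebius_cayleyCircle θ _).1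
  have hF : cayleyPath θ g =
      h * diagonal (fun j => cayleyCircle (θ * Real.tan (φ j / 2))) * hᴴ := by
    rw [hg, cayleyPath_unitary_conj hh, cayleyPath_diagonal θ hden]
    simp only [hz, (moebius_cayleyCircle θ _).2]
  refine ⟨?_, ?_, cayleyPath_one g, hF⟩
  · rw [hg, smul_one_add_smul_unitary_conj hh, smul_one_add_smul_diagonal]
    refine ((Unitary.isUnit_coe (U := ⟨h, hh⟩)).mul (isUnit_diagonal.mpr ?_)).mul
      (Unitary.isUnit_coe (U := star ⟨h, hh⟩))
    exact Pi.isUnit_iff.mpr fun j => (hden j).isUnit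
  · rw [hF]
    exact mul_mem (mul_mem hh (diagonal_mem_unitaryGroup fun j => cayleyCircle_mem_unitary _))
      (Unitary.star_mem hh)

/-- For a unitary `g` with eigenvalues `e^{iφ_j}`, `φ_j ∈ (-π,π)`, and
`θ ∈ (0,1]`, the matrix `F_θ(g)` is well-defined, unitary, equals `g` at
`θ = 1`, and its eigenvalues are `(1 + iθ tan(φ_j/2)) / (1 - iθ tan(φ_j/2))`. -/
theorem cayleyPath_unitary_eigenvalues {d : ℕ}
    (g h : Matrix (Fin d) (Fin d) ℂ)
    (hh : h ∈ Matrix.unitaryGroup (Fin d) ℂ)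
    (φ : Fin d → ℝ) (hφ : ∀ j, φ j ∈ Set.Ioo (-Real.pi) Real.pi)
    (hg : g = h * Matrix.diagonal (fun j => Complex.exp ((φ j : ℂ) * Complex.I)) * hᴴ)
    (θ : ℝ) (hθ : θ ∈ Set.Ioc (0 : ℝ) 1) :
    IsUnit (((1 + θ : ℝ) : ℂ) • (1 : Matrix (Fin d) (Fin d) ℂ) +
        ((1 - θ : ℝ) : ℂ) • g) ∧
    cayleyPath θ g ∈ Matrix.unitaryGroup (Fin d) ℂ ∧
    cayleyPath 1 g = g ∧
    cayleyPath θ g =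
      h * Matrix.diagonal (fun j =>
        (1 + ((θ * Real.tan (φ j / 2) : ℝ) : ℂ) * Complex.I) /
          (1 - ((θ * Real.tan (φ j / 2) : ℝ) : ℂ) * Complex.I)) * hᴴ :=
  cayleyPath_unitary_eigenvalues_general g h hh φ hφ hg θ
end
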